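/- Suppose the m agents hold calibration scores of sizes n₁,…,n_m, with all scores and the test score i.i.d. with cdf F_S. For ℓ_j ∈ {1,…,n_j} and k ∈ {1,…,m}, let S_(ℓ₁,…,ℓ_m,k) be the k-th smallest among the agents' local order statistics Q_(ℓ_j)(S_j), and Ĉ(x) := {y : s(x,y) ≤ S_(ℓ₁,…,ℓ_m,k)}. Then P(P(Y ∈ Ĉ(X) | D) ≥ 1−α) ≥ PB(k−1; (F_{U_(ℓ_j:n_j)}(1−α))_{j=1,…,m}), where PB(·; u) is the cdf of the Poisson-Binomial distribution with parameter vector u and F_{U_(ℓ_j:n_j)} is the cdf of the Beta(ℓ_j, n_j−ℓ_j+1) distribution; equality holds if the scores are almost surely distinct. -/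

import Mathlib

open MeasureTheory ProbabilityTheory Set

/-- The `r`-th smallest value (order statistic, 1-indexed, ties with multiplicity)
of a finite real vector. -/
noncomputable def orderStat {N : ℕ} (S : Fin N → ℝ) (r : ℕ) : ℝ :=
  ((Multiset.ofList (List.ofFn S)).sort (· ≤ ·)).getD (r - 1) 0

/-- Product of `N` i.i.d. uniform distributions on `[0,1]`. -/
noncomputable def unifPi (N : ℕ) : Measure (Fin N → ℝ) :=
  Measure.pi fun _ => volume.restrict (Icc (0:ℝ) 1)

/-- The Beta(r, N-r+1) distribution: the law of the `r`-th order statistic of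
`N` i.i.d. uniform random variables on `[0,1]`. -/
noncomputable def betaOS (N r : ℕ) : Measure ℝ :=
  Measure.map (fun u => orderStat u r) (unifPi N)

/-- The cdf of the Beta(r, N-r+1) distribution (cdf of `U_(r:N)`). -/
noncomputable def betaCDF (N r : ℕ) (t : ℝ) : ℝ := (betaOS N r (Iic t)).toReal

/-- Generalized inverse (quantile function) of a cdf. -/
noncomputable def genInv (F : ℝ → ℝ) (p : ℝ) : ℝ := sInf {x | p ≤ F x}

/-- Quantile function of the Beta(r, N-r+1) distribution. -/
noncomputable def betaQuantile (N r : ℕ) (p : ℝ) : ℝ := genInv (betaCDF N r) p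

/-- Quantile-of-quantiles: the `k`-th smallest of the `m` within-group `ℓ`-th
order statistics of an `n × m` array. -/
noncomputable def qqStat {n m : ℕ} (ℓ k : ℕ) (Z : Fin n → Fin m → ℝ) : ℝ :=
  orderStat (fun j => orderStat (fun i => Z i j) ℓ) k

/-- Product of `n × m` i.i.d. uniform distributions on `[0,1]`. -/
noncomputable def unifPi2 (n m : ℕ) : Measure (Fin n → Fin m → ℝ) :=
  Measure.pi fun _ => Measure.pi fun _ => volume.restrict (Icc (0:ℝ) 1)

/-- The law of `U_(ℓ:n, k:m)`, the `k`-th order statistic of the `m` within-group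
`ℓ`-th order statistics of an `n × m` array of i.i.d. uniform variables
(equivalently, of `m` i.i.d. Beta(ℓ, n-ℓ+1) variables). -/
noncomputable def betaBetaOS (n m ℓ k : ℕ) : Measure ℝ :=
  Measure.map (qqStat ℓ k) (unifPi2 n m)

/-- The auxiliary function `g(t) = sup_{δ ∈ (0, min{t,1-t})} (t-δ)/√(log(1/δ))`. -/
noncomputable def gFun (t : ℝ) : ℝ :=
  sSup ((fun δ => (t - δ) / Real.sqrt (Real.log (1/δ))) '' Ioo 0 (min t (1 - t)))

/-- The cdf of the Poisson-Binomial distribution with parameter vector `u`,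
evaluated at the integer `r`. -/
noncomputable def pbCDF {m : ℕ} (u : Fin m → ℝ) (r : ℕ) : ℝ :=
  ∑ A ∈ Finset.univ.powerset.filter (fun A : Finset (Fin m) => A.card ≤ r),
    (∏ j ∈ A, u j) * ∏ j ∈ Aᶜ, (1 - u j)

open scoped ENNReal Finset

/-! With `L = {x | F x < 1 - α}`, the event `1 - α ≤ F (S_qq)` says `S_qq ∉ L`. As `L` is a lower
set, an order statistic lies in `L` iff enough of its arguments do, so the event depends only on
which scores fall into `L`. These indicators are i.i.d. Bernoulli with parameter `q = ν L ≤ 1 - α`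
(with equality when `ν` has no atoms), exactly as for i.i.d. uniforms thresholded at `q`.
Thresholding the uniforms at `1 - α ≥ q` instead can only shrink the event, and then the groups
are independent, group `j` contributing to the count with probability `F_{U_(ℓ_j:n_j)}(1 - α)`:
the count is Poisson-binomial. -/

theorem List.Pairwise.getElem_mem_iff_lt_countP {α : Type*} [Preorder α] {l : List α}
    (hl : l.Pairwise (· ≤ ·)) {L : Set α} [DecidablePred (· ∈ L)] (hL : IsLowerSet L)
    {p : ℕ} (hp : p < l.length) :
    l[p] ∈ L ↔ p < l.countP (· ∈ L) := by
  have hsplit : l = l.take p ++ l[p] :: l.drop (p + 1) := by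
    rw [← List.drop_eq_getElem_cons hp, List.take_append_drop]
  have hsorted := hsplit ▸ hl
  simp only [List.pairwise_append, List.pairwise_cons, List.mem_cons] at hsorted
  have hbefore : ∀ x ∈ l.take p, x ≤ l[p] := fun x hx => hsorted.2.2 x hx _ (Or.inl rfl)
  have hafter : ∀ y ∈ l.drop (p + 1), l[p] ≤ y := hsorted.2.1.1
  have hlen : (l.take p).length = p := List.length_take_of_le hp.le
  have hcount : l.countP (· ∈ L) = (l.take p).countP (· ∈ L)
      + (l.drop (p + 1)).countP (· ∈ L) + if l[p] ∈ L then 1 else 0 := by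
    conv_lhs => rw [hsplit, List.countP_append, List.countP_cons]
    simp only [decide_eq_true_eq]
    omega
  by_cases h : l[p] ∈ L
  · have : (l.take p).countP (· ∈ L) = p := by
      rw [List.countP_eq_length.2 fun x hx => by simpa using hL (hbefore x hx) h, hlen]
    rw [hcount, if_pos h, this]
    simp only [h, true_iff]
    omega
  · have hnone : (l.drop (p + 1)).countP (· ∈ L) = 0 :=
      List.countP_eq_zero.2 fun y hy hyL => h (hL (hafter y hy) (by simpa using hyL))
    have := hlen ▸ List.countP_le_length (p := (· ∈ L)) (l := l.take p)
    rw [hcount, if_neg h, hnone]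
    simp only [h, false_iff, not_lt]
    omega

theorem orderStat_mem_iff_le_card {N : ℕ} (S : Fin N → ℝ) {r : ℕ} (hr1 : 1 ≤ r) (hrN : r ≤ N)
    {L : Set ℝ} [DecidablePred (· ∈ L)] (hL : IsLowerSet L) :
    orderStat S r ∈ L ↔ r ≤ #{i | S i ∈ L} := by
  set l := (Multiset.ofList (List.ofFn S)).sort (· ≤ ·)
  have hp : r - 1 < l.length := by simp [l]; omega
  have hcount : l.countP (· ∈ L) = #{i | S i ∈ L} := by
    rw [← Multiset.coe_countP, Multiset.sort_eq, ← Fin.univ_val_map, Multiset.countP_map,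
      Finset.card, Finset.filter_val]
  rw [orderStat, List.getD_eq_getElem l 0 hp,
    (Multiset.pairwise_sort _ _).getElem_mem_iff_lt_countP hL hp, hcount]
  omega

theorem MeasurableSet.ite_compl {α : Type*} [MeasurableSpace α] {s : Set α} (hs : MeasurableSet s)
    (p : Prop) [Decidable p] : MeasurableSet (if p then s else sᶜ) := by
  split_ifs
  exacts [hs, hs.compl]

section IndependentHits

variable {Ω ι : Type*} [Fintype ι] [DecidableEq ι] {β : ι → Type*} {X : ∀ i, Ω → β i}
  {A : ∀ i, Set (β i)} [∀ i, DecidablePred (· ∈ A i)]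

theorem preimage_filter_mem_singleton (B : Finset ι) :
    (fun ω => ({i | X i ω ∈ A i} : Finset ι)) ⁻¹' {B}
      = ⋂ i, X i ⁻¹' (if i ∈ B then A i else (A i)ᶜ) := by
  ext ω
  simp only [Set.mem_preimage, mem_singleton_iff, mem_iInter, Finset.ext_iff, Finset.mem_filter,
    Finset.mem_univ, true_and]
  refine forall_congr' fun i => ?_
  split_ifs with hi <;> simp [hi]

theorem setOf_filter_mem_eq_biUnion (Q : Finset ι → Prop) [DecidablePred Q] :
    {ω | Q {i | X i ω ∈ A i}} = ⋃ B ∈ ({B | Q B} : Finset (Finset ι)),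
      ⋂ i, X i ⁻¹' (if i ∈ B then A i else (A i)ᶜ) := by
  simp_rw [← preimage_filter_mem_singleton, Finset.set_biUnion_preimage_singleton]
  ext; simp

variable [MeasurableSpace Ω] [∀ i, MeasurableSpace (β i)]

theorem measurableSet_setOf_filter_mem (hX : ∀ i, Measurable (X i))
    (hA : ∀ i, MeasurableSet (A i)) (Q : Finset ι → Prop) [DecidablePred Q] :
    MeasurableSet {ω | Q {i | X i ω ∈ A i}} := by
  rw [setOf_filter_mem_eq_biUnion]
  exact Finset.measurableSet_biUnion _ fun B _ =>
    .iInter fun i => hX i ((hA i).ite_compl _)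

theorem measure_setOf_filter_mem {μ : Measure Ω} [IsProbabilityMeasure μ]
    (hind : iIndepFun X μ) (hX : ∀ i, Measurable (X i))
    (hA : ∀ i, MeasurableSet (A i)) (Q : Finset ι → Prop) [DecidablePred Q] :
    μ {ω | Q {i | X i ω ∈ A i}}
      = ∑ B with Q B, (∏ i ∈ B, μ (X i ⁻¹' A i)) * ∏ i ∈ Bᶜ, (1 - μ (X i ⁻¹' A i)) := by
  rw [setOf_filter_mem_eq_biUnion, measure_biUnion_finset]
  · refine Finset.sum_congr rfl fun B _ => ?_
    rw [hind.meas_iInter fun i => ⟨_, (hA i).ite_compl _, rfl⟩, ← Finset.prod_mul_prod_compl B]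
    congr 1 <;> refine Finset.prod_congr rfl fun i hi => ?_
    · rw [if_pos hi]
    · rw [if_neg (Finset.mem_compl.1 hi), preimage_compl, prob_compl_eq_one_sub (hX i (hA i))]
  · intro B _ B' _ hBB'
    simp_rw [← preimage_filter_mem_singleton]
    exact (disjoint_singleton.2 hBB').preimage _
  · exact fun B _ => .iInter fun i => hX i ((hA i).ite_compl _)

theorem measure_setOf_filter_mem_congr {Ω' : Type*} [MeasurableSpace Ω']
    {γ : ι → Type*} [∀ i, MeasurableSpace (γ i)] {Y : ∀ i, Ω' → γ i}
    {A' : ∀ i, Set (γ i)} [∀ i, DecidablePred (· ∈ A' i)]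
    {μ : Measure Ω} [IsProbabilityMeasure μ] {μ' : Measure Ω'} [IsProbabilityMeasure μ']
    (hindX : iIndepFun X μ) (hX : ∀ i, Measurable (X i)) (hA : ∀ i, MeasurableSet (A i))
    (hindY : iIndepFun Y μ') (hY : ∀ i, Measurable (Y i)) (hA' : ∀ i, MeasurableSet (A' i))
    (h : ∀ i, μ (X i ⁻¹' A i) = μ' (Y i ⁻¹' A' i)) (Q : Finset ι → Prop) [DecidablePred Q] :
    μ {ω | Q {i | X i ω ∈ A i}} = μ' {ω | Q {i | Y i ω ∈ A' i}} := by
  simp only [measure_setOf_filter_mem hindX hX hA, measure_setOf_filter_mem hindY hY hA', h]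

end IndependentHits

theorem measureReal_card_filter_mem_le_eq_pbCDF {Ω : Type*} [MeasurableSpace Ω] {μ : Measure Ω}
    [IsProbabilityMeasure μ] {m : ℕ} {β : Fin m → Type*} [∀ i, MeasurableSpace (β i)]
    {X : ∀ i, Ω → β i} {A : ∀ i, Set (β i)} [∀ i, DecidablePred (· ∈ A i)]
    (hind : iIndepFun X μ) (hX : ∀ i, Measurable (X i)) (hA : ∀ i, MeasurableSet (A i))
    (r : ℕ) :
    μ.real {ω | #{i | X i ω ∈ A i} ≤ r} = pbCDF (fun i => μ.real (X i ⁻¹' A i)) r := by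
  rw [measureReal_def, measure_setOf_filter_mem hind hX hA (fun B => #B ≤ r), pbCDF,
    Finset.powerset_univ, ENNReal.toReal_sum fun B _ => ENNReal.mul_ne_top
      (ENNReal.prod_ne_top fun i _ => measure_ne_top _ _)
      (ENNReal.prod_ne_top fun i _ => ENNReal.sub_ne_top ENNReal.one_ne_top)]
  refine Finset.sum_congr rfl fun B _ => ?_
  simp only [ENNReal.toReal_mul, ENNReal.toReal_prod, measureReal_def,
    ENNReal.toReal_sub_of_le prob_le_one ENNReal.one_ne_top, ENNReal.toReal_one]

theorem measure_cdf_lt_le (ν : Measure ℝ) [IsProbabilityMeasure ν] (p : ℝ) :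
    ν {x | cdf ν x < p} ≤ ENNReal.ofReal p := by
  have hmeas : MeasurableSet {x | cdf ν x < p} := (monotone_cdf ν).measurable measurableSet_Iio
  -- By inner regularity it suffices to bound compact subsets `K`; each lies below `sSup K ∈ K`.
  rw [hmeas.measure_eq_iSup_isCompact_of_ne_top (measure_ne_top _ _)]
  refine iSup₂_le fun K hKL => iSup_le fun hK => ?_
  rcases K.eq_empty_or_nonempty with rfl | hne
  · simp
  calc ν K ≤ ν (Iic (sSup K)) := measure_mono fun x hx => le_csSup hK.bddAbove hx
    _ = ENNReal.ofReal (cdf ν (sSup K)) := (ofReal_cdf ν _).symm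
    _ ≤ ENNReal.ofReal p := ENNReal.ofReal_le_ofReal (hKL (hK.sSup_mem hne)).le

theorem measure_cdf_lt_eq (ν : Measure ℝ) [IsProbabilityMeasure ν] (hatom : ∀ x, ν {x} = 0)
    {p : ℝ} (hp0 : 0 < p) (hp1 : p < 1) :
    ν {x | cdf ν x < p} = ENNReal.ofReal p := by
  refine (measure_cdf_lt_le ν p).antisymm ?_
  set S := {x | p ≤ cdf ν x}
  have hSne : S.Nonempty := ((tendsto_cdf_atTop ν).eventually (eventually_ge_nhds hp1)).exists
  have hSbdd : BddBelow S := by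
    obtain ⟨z, hz⟩ := ((tendsto_cdf_atBot ν).eventually (eventually_lt_nhds hp0)).exists
    exact ⟨z, fun s hs => le_of_not_gt fun h => (hs.trans (monotone_cdf ν h.le)).not_gt hz⟩
  have hx₀ : p ≤ cdf ν (sInf S) := by
    refine ge_of_tendsto (((cdf ν).right_continuous _).mono Ioi_subset_Ici_self) ?_
    filter_upwards [self_mem_nhdsWithin] with x hx
    obtain ⟨s, hsS, hsx⟩ := (csInf_lt_iff hSbdd hSne).mp hx
    exact hsS.trans (monotone_cdf ν hsx.le)
  calc ENNReal.ofReal p ≤ ENNReal.ofReal (cdf ν (sInf S)) := ENNReal.ofReal_le_ofReal hx₀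
    _ = ν (Iio (sInf S)) := by rw [ofReal_cdf, measure_congr (Iio_ae_eq_Iic' (hatom _))]
    _ ≤ ν {x | cdf ν x < p} := measure_mono fun x hx =>
      show cdf ν x < p from not_le.1 fun h => hx.not_ge (csInf_le hSbdd h)

theorem measure_singleton_eq_zero_of_indepFun {Ω : Type*} [MeasurableSpace Ω] {μ : Measure Ω}
    {X Y : Ω → ℝ} (hX : Measurable X) (hY : Measurable Y) (hXY : IndepFun X Y μ)
    {ν : Measure ℝ} (hνX : μ.map X = ν) (hνY : μ.map Y = ν) (hne : μ {ω | X ω = Y ω} = 0)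
    (x : ℝ) : ν {x} = 0 := by
  have hsq : ν {x} * ν {x} = μ (X ⁻¹' {x} ∩ Y ⁻¹' {x}) := by
    rw [hXY.measure_inter_preimage_eq_mul _ _ (measurableSet_singleton x)
      (measurableSet_singleton x), ← Measure.map_apply hX (measurableSet_singleton x),
      ← Measure.map_apply hY (measurableSet_singleton x), hνX, hνY]
  have : μ (X ⁻¹' {x} ∩ Y ⁻¹' {x}) = 0 :=
    measure_mono_null (fun ω ⟨hXω, hYω⟩ => hXω.trans hYω.symm) hne
  simpa [this] using hsq

theorem measurable_orderStat {N r : ℕ} (hr1 : 1 ≤ r) (hrN : r ≤ N) :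
    Measurable fun u : Fin N → ℝ => orderStat u r := by
  refine measurable_of_Iic fun t => ?_
  have : (fun u : Fin N → ℝ => orderStat u r) ⁻¹' Iic t = {u | r ≤ #{i | u i ∈ Iic t}} :=
    Set.ext fun u => orderStat_mem_iff_le_card u hr1 hrN (isLowerSet_Iic t)
  rw [this]
  exact measurableSet_setOf_filter_mem (X := fun i (u : Fin N → ℝ) => u i) measurable_pi_apply
    (fun _ => measurableSet_Iic) (fun B => r ≤ #B)

instance : IsProbabilityMeasure (volume.restrict (Icc (0 : ℝ) 1)) := ⟨by simp⟩

instance (N : ℕ) : IsProbabilityMeasure (unifPi N) := by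
  unfold unifPi
  infer_instance

theorem volume_restrict_Icc_zero_one_Iic {t : ℝ} (ht1 : t ≤ 1) :
    volume.restrict (Icc (0 : ℝ) 1) (Iic t) = ENNReal.ofReal t := by
  have : Iic t ∩ Icc 0 1 = Icc 0 t := Set.ext fun x => by
    simp only [mem_inter_iff, mem_Iic, mem_Icc]
    exact ⟨fun h => ⟨h.2.1, h.1⟩, fun h => ⟨h.2, h.1, h.2.trans ht1⟩⟩
  rw [Measure.restrict_apply measurableSet_Iic, this, Real.volume_Icc, sub_zero]

theorem iIndepFun_uncurry_pi {ι : Type*} [Fintype ι] {κ : ι → Type*} [∀ i, Fintype (κ i)]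
    {𝓧 : (i : ι) → κ i → Type*} [∀ i j, MeasurableSpace (𝓧 i j)]
    (μ : ∀ i j, Measure (𝓧 i j)) [∀ i j, IsProbabilityMeasure (μ i j)] :
    iIndepFun (fun (p : (i : ι) × κ i) (ω : ∀ i j, 𝓧 i j) => ω p.1 p.2)
      (Measure.pi fun i => Measure.pi (μ i)) := by
  simpa only [Measure.infinitePi_eq_pi, id_eq] using
    iIndepFun_uncurry_infinitePi (X := fun _ _ => id) μ fun _ _ => measurable_id

section Groups

variable {m : ℕ} {nv : Fin m → ℕ}

def numFullGroups (ℓ : Fin m → ℕ) (B : Finset ((j : Fin m) × Fin (nv j))) : ℕ :=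
  #{j | ℓ j ≤ #{i | ⟨j, i⟩ ∈ B}}

variable {ℓ : Fin m → ℕ} {k : ℕ}

theorem orderStat_orderStat_mem_iff (hℓ1 : ∀ j, 1 ≤ ℓ j) (hℓn : ∀ j, ℓ j ≤ nv j)
    (hk1 : 1 ≤ k) (hkm : k ≤ m) {L : Set ℝ} [DecidablePred (· ∈ L)] (hL : IsLowerSet L)
    (Z : (j : Fin m) × Fin (nv j) → ℝ) :
    orderStat (fun j => orderStat (fun i => Z ⟨j, i⟩) (ℓ j)) k ∈ L
      ↔ k ≤ numFullGroups ℓ {a | Z a ∈ L} := by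
  simp only [orderStat_mem_iff_le_card _ hk1 hkm hL, numFullGroups,
    orderStat_mem_iff_le_card _ (hℓ1 _) (hℓn _) hL, Finset.mem_filter, Finset.mem_univ, true_and]

theorem measure_orderStat_orderStat_notMem_eq (hℓ1 : ∀ j, 1 ≤ ℓ j) (hℓn : ∀ j, ℓ j ≤ nv j)
    (hk1 : 1 ≤ k) (hkm : k ≤ m) {Ω : Type*} [MeasurableSpace Ω] {μ : Measure Ω}
    [IsProbabilityMeasure μ] {W : (j : Fin m) × Fin (nv j) → Ω → ℝ}
    (hmeas : ∀ a, Measurable (W a)) (hindep : iIndepFun W μ) {ν : Measure ℝ}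
    (hlaw : ∀ a, μ.map (W a) = ν) {L : Set ℝ} (hL : IsLowerSet L) (hLm : MeasurableSet L)
    {q : ℝ} (hq1 : q ≤ 1) (hνL : ν L = ENNReal.ofReal q) :
    μ {ω | orderStat (fun j => orderStat (fun i => W ⟨j, i⟩ ω) (ℓ j)) k ∉ L}
      = (Measure.pi fun j => unifPi (nv j))
          {Z | q < orderStat (fun j => orderStat (Z j) (ℓ j)) k} := by
  classical
  have hW : {ω | orderStat (fun j => orderStat (fun i => W ⟨j, i⟩ ω) (ℓ j)) k ∉ L}
      = {ω | ¬ k ≤ numFullGroups ℓ {a | W a ω ∈ L}} :=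
    Set.ext fun ω => (orderStat_orderStat_mem_iff hℓ1 hℓn hk1 hkm hL fun a => W a ω).not
  have hZ : {Z : ∀ j, Fin (nv j) → ℝ | q < orderStat (fun j => orderStat (Z j) (ℓ j)) k}
      = {Z | ¬ k ≤ numFullGroups ℓ {a | Z a.1 a.2 ∈ Iic q}} :=
    Set.ext fun Z => show q < _ ↔ ¬ _ from not_le.symm.trans
      (orderStat_orderStat_mem_iff hℓ1 hℓn hk1 hkm (isLowerSet_Iic q) fun a => Z a.1 a.2).not
  have heval (a : (j : Fin m) × Fin (nv j)) : MeasurePreserving (fun Z => Z a.1 a.2)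
      (Measure.pi fun j => unifPi (nv j)) (volume.restrict (Icc (0 : ℝ) 1)) :=
    (measurePreserving_eval (fun _ => volume.restrict (Icc (0 : ℝ) 1)) a.2).comp
      (measurePreserving_eval (fun j => unifPi (nv j)) a.1)
  rw [hW, hZ]
  refine measure_setOf_filter_mem_congr hindep hmeas (fun _ => hLm)
    (iIndepFun_uncurry_pi fun _ _ => volume.restrict (Icc (0 : ℝ) 1))
    (fun a => (heval a).measurable) (fun _ => measurableSet_Iic) (fun a => ?_)
    (fun B => ¬ k ≤ numFullGroups ℓ B)
  rw [← Measure.map_apply (hmeas a) hLm, hlaw, hνL, ← volume_restrict_Icc_zero_one_Iic hq1]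
  exact ((heval a).measure_preimage measurableSet_Iic.nullMeasurableSet).symm

theorem measure_le_cdf_orderStat_orderStat_eq (hℓ1 : ∀ j, 1 ≤ ℓ j) (hℓn : ∀ j, ℓ j ≤ nv j)
    (hk1 : 1 ≤ k) (hkm : k ≤ m) {Ω : Type*} [MeasurableSpace Ω] {μ : Measure Ω}
    [IsProbabilityMeasure μ] {W : (j : Fin m) × Fin (nv j) → Ω → ℝ}
    (hmeas : ∀ a, Measurable (W a)) (hindep : iIndepFun W μ) {ν : Measure ℝ}
    [IsProbabilityMeasure ν] (hlaw : ∀ a, μ.map (W a) = ν) (p : ℝ) :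
    μ {ω | p ≤ cdf ν (orderStat (fun j => orderStat (fun i => W ⟨j, i⟩ ω) (ℓ j)) k)}
      = (Measure.pi fun j => unifPi (nv j)) {Z | (ν {x | cdf ν x < p}).toReal
          < orderStat (fun j => orderStat (Z j) (ℓ j)) k} := by
  simp only [← not_lt]
  exact measure_orderStat_orderStat_notMem_eq hℓ1 hℓn hk1 hkm hmeas hindep hlaw
    (fun x y hyx hx => (monotone_cdf ν hyx).trans_lt hx)
    ((monotone_cdf ν).measurable measurableSet_Iio) measureReal_le_one
    (ENNReal.ofReal_toReal (measure_ne_top _ _)).symm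

theorem measureReal_lt_orderStat_orderStat (hℓ1 : ∀ j, 1 ≤ ℓ j) (hℓn : ∀ j, ℓ j ≤ nv j)
    (hk1 : 1 ≤ k) (hkm : k ≤ m) (t : ℝ) :
    (Measure.pi fun j => unifPi (nv j)).real
        {Z | t < orderStat (fun j => orderStat (Z j) (ℓ j)) k}
      = pbCDF (fun j => betaCDF (nv j) (ℓ j) t) (k - 1) := by
  classical
  have hset : {Z : ∀ j, Fin (nv j) → ℝ | t < orderStat (fun j => orderStat (Z j) (ℓ j)) k}
      = {Z | #{j | Z j ∈ (fun v => orderStat v (ℓ j)) ⁻¹' Iic t} ≤ k - 1} := Set.ext fun Z => by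
    have := orderStat_mem_iff_le_card (fun j => orderStat (Z j) (ℓ j)) hk1 hkm (isLowerSet_Iic t)
    simp only [mem_Iic] at this
    simp only [mem_ofPred_eq, mem_preimage, mem_Iic, ← not_le, this]
    omega
  have hblocks : iIndepFun (fun j (Z : ∀ j, Fin (nv j) → ℝ) => Z j)
      (Measure.pi fun j => unifPi (nv j)) := by
    simpa only [id_eq] using iIndepFun_pi (X := fun _ => id) fun _ => aemeasurable_id
  rw [hset, measureReal_card_filter_mem_le_eq_pbCDF hblocks measurable_pi_apply
    fun j => measurable_orderStat (hℓ1 j) (hℓn j) measurableSet_Iic]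
  congr 1
  funext j
  have hos := measurable_orderStat (hℓ1 j) (hℓn j)
  rw [betaCDF, betaOS, ← measureReal_def, map_measureReal_apply hos measurableSet_Iic]
  exact (measurePreserving_eval _ j).measureReal_preimage (hos measurableSet_Iic).nullMeasurableSet

end Groups

theorem conditional_coverage_qq_nj_general {Ω : Type*} [MeasurableSpace Ω]
    (μ : Measure Ω) [IsProbabilityMeasure μ]
    {m : ℕ} (nv : Fin m → ℕ)
    (ℓ : Fin m → ℕ) (hℓ1 : ∀ j, 1 ≤ ℓ j) (hℓn : ∀ j, ℓ j ≤ nv j)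
    (k : ℕ) (hk1 : 1 ≤ k) (hkm : k ≤ m)
    (α : ℝ) (hα : α ∈ Ioo (0:ℝ) 1)
    (W : Option ((j : Fin m) × Fin (nv j)) → Ω → ℝ) (ν : Measure ℝ)
    (hmeas : ∀ a, Measurable (W a))
    (hindep : iIndepFun W μ)
    (hlaw : ∀ a, Measure.map (W a) μ = ν)
    (F : ℝ → ℝ) (hF : F = fun x => (ν (Iic x)).toReal)
    (Sqq : Ω → ℝ)
    (hSqq : Sqq = fun ω =>
      orderStat (fun j => orderStat (fun i => W (some ⟨j, i⟩) ω) (ℓ j)) k)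
    (coverage : Ω → ℝ) (hcov : coverage = fun ω => F (Sqq ω)) :
    ENNReal.ofReal (pbCDF (fun j => betaCDF (nv j) (ℓ j) (1 - α)) (k - 1))
      ≤ μ {ω | 1 - α ≤ coverage ω}
    ∧ ((∀ a b, a ≠ b → μ {ω | W a ω = W b ω} = 0) →
        (μ {ω | 1 - α ≤ coverage ω}).toReal
          = pbCDF (fun j => betaCDF (nv j) (ℓ j) (1 - α)) (k - 1)) := by
  obtain ⟨hα0, hα1⟩ := hα
  have : IsProbabilityMeasure ν :=
    hlaw none ▸ Measure.isProbabilityMeasure_map (hmeas none).aemeasurable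
  have hFcdf : F = cdf ν := funext fun x => by rw [hF, cdf_eq_real, measureReal_def]
  subst hFcdf hcov hSqq
  have hcoupling := measure_le_cdf_orderStat_orderStat_eq hℓ1 hℓn hk1 hkm (fun a => hmeas (some a))
    (hindep.precomp (Option.some_injective _)) (fun a => hlaw (some a)) (1 - α)
  set q := (ν {x | cdf ν x < 1 - α}).toReal
  have hq : q ≤ 1 - α := ENNReal.toReal_le_of_le_ofReal (by linarith) (measure_cdf_lt_le ν _)
  have hpb := measureReal_lt_orderStat_orderStat hℓ1 hℓn hk1 hkm (1 - α)
  refine ⟨?_, fun hdist => ?_⟩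
  · rw [hcoupling, ← hpb, ofReal_measureReal]
    exact measure_mono fun Z hZ => hq.trans_lt hZ
  · let j₀ : Fin m := ⟨0, by omega⟩
    have hne : none ≠ some (⟨j₀, ⟨0, (hℓ1 j₀).trans (hℓn j₀)⟩⟩ : (j : Fin m) × Fin (nv j)) :=
      (Option.some_ne_none _).symm
    have hatom := measure_singleton_eq_zero_of_indepFun (hmeas _) (hmeas _)
      (hindep.indepFun hne) (hlaw _) (hlaw _) (hdist _ _ hne)
    have hq' : q = 1 - α :=
      (congrArg ENNReal.toReal (measure_cdf_lt_eq ν hatom (by linarith) (by linarith))).trans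
        (ENNReal.toReal_ofReal (by linarith))
    rw [hcoupling, hq', ← hpb, measureReal_def]

/-- One-shot federated setting with `m` agents holding `n_j` i.i.d.
scores with common cdf `F` (together with the test score): the training-conditional
coverage `F(S_(ℓ₁,…,ℓ_m,k))` satisfies
`P(coverage ≥ 1-α) ≥ PB(k-1; (F_{U_(ℓ_j:n_j)}(1-α))_j)` where `PB(·;u)` is the
Poisson-Binomial cdf; equality holds when the scores are almost surely distinct. -/
theorem conditional_coverage_qq_nj {Ω : Type*} [MeasurableSpace Ω]
    (μ : Measure Ω) [IsProbabilityMeasure μ]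
    {m : ℕ} (hm : 1 ≤ m) (nv : Fin m → ℕ) (hnv : ∀ j, 1 ≤ nv j)
    (ℓ : Fin m → ℕ) (hℓ1 : ∀ j, 1 ≤ ℓ j) (hℓn : ∀ j, ℓ j ≤ nv j)
    (k : ℕ) (hk1 : 1 ≤ k) (hkm : k ≤ m)
    (α : ℝ) (hα : α ∈ Ioo (0:ℝ) 1)
    (W : Option ((j : Fin m) × Fin (nv j)) → Ω → ℝ) (ν : Measure ℝ)
    (hmeas : ∀ a, Measurable (W a))
    (hindep : iIndepFun W μ)
    (hlaw : ∀ a, Measure.map (W a) μ = ν)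
    (F : ℝ → ℝ) (hF : F = fun x => (ν (Iic x)).toReal)
    (Sqq : Ω → ℝ)
    (hSqq : Sqq = fun ω =>
      orderStat (fun j => orderStat (fun i => W (some ⟨j, i⟩) ω) (ℓ j)) k)
    (coverage : Ω → ℝ) (hcov : coverage = fun ω => F (Sqq ω)) :
    ENNReal.ofReal (pbCDF (fun j => betaCDF (nv j) (ℓ j) (1 - α)) (k - 1))
      ≤ μ {ω | 1 - α ≤ coverage ω}
    ∧ ((∀ a b, a ≠ b → μ {ω | W a ω = W b ω} = 0) →
        (μ {ω | 1 - α ≤ coverage ω}).toReal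
          = pbCDF (fun j => betaCDF (nv j) (ℓ j) (1 - α)) (k - 1)) :=
  conditional_coverage_qq_nj_general μ nv ℓ hℓ1 hℓn k hk1 hkm α hα W ν hmeas hindep hlaw F hF Sqq
    hSqq coverage hcov
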